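/- arXiv:math/0604613 — 2 statements merged into one kernel-verified Lean document; each statement's English description precedes it below -/
import Mathlib

section
/- The pairing χ is nondegenerate: if γ ∈ Γ satisfies χ(γ, γ') = 1 for all γ' ∈ Γ, then γ = 1. Consequently χ exhibits Γ as its own Pontryagin dual. -/
noncomputable section

/-- `Γ = {z ∈ ℂ : |z| ∈ q^ℤ}`. -/
def Gamma (q : ℝ) : Set ℂ := {z | ∃ k : ℤ, ‖z‖ = q ^ k}

/-- `Γ̄ = Γ ∪ {0}`. -/
def GammaBar (q : ℝ) : Set ℂ := Gamma q ∪ {0}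

/-- The representative of `arg z` modulo `2π` lying in `(-2π, 0]`; for
`γ = q^{iφ+k}` with `φ ∈ [0, 2π/|log q|)` one has `theta γ = φ · log q`. -/
def theta (z : ℂ) : ℝ := if z.arg ≤ 0 then z.arg else z.arg - 2 * Real.pi

/-- The (real-valued) exponent `k` with `|z| = q^k`. -/
def kIdx (q : ℝ) (z : ℂ) : ℝ := Real.log ‖z‖ / Real.log q

/-- The bicharacter `χ(q^{iφ+k}, q^{iψ+l}) = q^{i(lφ+kψ)}`, written in terms of the
decomposition data `theta` and `kIdx`; it satisfies `χ(0, γ) = 1`. -/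
def chi (q : ℝ) (z w : ℂ) : ℂ :=
  Complex.exp (Complex.I * ((kIdx q w * theta z + kIdx q z * theta w : ℝ) : ℂ))

/-- The exceptional set `{-1, -q^{-2}, -q^{-4}, …}`. -/
def excSet (q : ℝ) : Set ℂ := {z | ∃ n : ℕ, z = -((q : ℂ) ^ (2 * n))⁻¹}

/-- The infinite product defining the quantum exponential function. -/
def FqProd (q : ℝ) (γ : ℂ) : ℂ :=
  ∏' k : ℕ, (1 + (q : ℂ) ^ (2 * k) * (starRingEnd ℂ) γ) / (1 + (q : ℂ) ^ (2 * k) * γ)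

open Classical in
/-- Woronowicz's quantum exponential function `F_q`. -/
def Fq (q : ℝ) (γ : ℂ) : ℂ := if γ ∈ excSet q then -1 else FqProd q γ

/-- the pairing `χ` is nondegenerate: if `γ ∈ Γ` pairs trivially with
every `γ' ∈ Γ` then `γ = 1`. -/
theorem stmt_4 (q : ℝ) (hq0 : 0 < q) (hq1 : q < 1) :
    ∀ γ : ℂ, γ ∈ Gamma q → (∀ γ' : ℂ, γ' ∈ Gamma q → chi q γ γ' = 1) → γ = 1 := by
  intro γ hγ hchi
  obtain ⟨k, hk⟩ := hγ
  have hlogq : Real.log q < 0 := Real.log_neg hq0 hq1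
  have hlogq' : Real.log q ≠ 0 := ne_of_lt hlogq
  have hkγ : kIdx q γ = k := by
    rw [kIdx, hk, Real.log_zpow]
    field_simp
  -- theta bounds
  have hθub : theta γ ≤ 0 := by
    unfold theta
    split
    · assumption
    · nlinarith [Complex.arg_le_pi γ, Real.pi_pos]
  have hθlb : -(2 * Real.pi) < theta γ := by
    unfold theta
    split
    · nlinarith [Complex.neg_pi_lt_arg γ, Real.pi_pos]
    · nlinarith [‹¬ γ.arg ≤ 0›, Real.pi_pos]
  -- Step A : pair with q itself
  have hqmem : (q : ℂ) ∈ Gamma q := ⟨1, by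
    rw [Complex.norm_real, Real.norm_eq_abs, abs_of_pos hq0, zpow_one]⟩
  have hA := hchi _ hqmem
  have hkq : kIdx q (q : ℂ) = 1 := by
    rw [kIdx, Complex.norm_real, Real.norm_eq_abs, abs_of_pos hq0]
    field_simp
  have hθq : theta (q : ℂ) = 0 := by
    unfold theta
    rw [Complex.arg_ofReal_of_nonneg hq0.le]
    simp
  rw [chi, hkq, hθq] at hA
  simp only [one_mul, mul_zero, add_zero] at hA
  rw [Complex.exp_eq_one_iff] at hA
  obtain ⟨n, hn⟩ := hA
  have hθ : theta γ = 2 * Real.pi * n := by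
    have := congrArg Complex.im hn
    simpa [Complex.ext_iff, mul_comm] using this
  have hn0 : n = 0 := by
    have h1 : (n : ℝ) ≤ 0 := by
      by_contra h
      push_neg at h
      have hzn : (0 : ℤ) < n := by exact_mod_cast h
      have hn1 : (1 : ℝ) ≤ n := by exact_mod_cast hzn
      nlinarith [Real.pi_pos]
    have h2 : (-1 : ℝ) < n := by
      by_contra h
      push_neg at h
      nlinarith [Real.pi_pos]
    have : (-1 : ℤ) < n ∧ (n : ℤ) ≤ 0 := ⟨by exact_mod_cast h2, by exact_mod_cast h1⟩
    omega
  have hθ0 : theta γ = 0 := by rw [hθ, hn0]; simp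
  have harg : γ.arg = 0 := by
    unfold theta at hθ0
    by_cases h : γ.arg ≤ 0
    · simpa [h] using hθ0
    · exfalso
      rw [if_neg h] at hθ0
      nlinarith [Complex.arg_le_pi γ, Real.pi_pos]
  -- Step B : pair with exp(-i)
  have hemem : Complex.exp ((-1 : ℝ) * Complex.I) ∈ Gamma q := ⟨0, by
    rw [Complex.norm_exp]
    simp⟩
  have hB := hchi _ hemem
  have hargE : (Complex.exp ((-1 : ℝ) * Complex.I)).arg = -1 := by
    rw [Complex.exp_mul_I]
    exact Complex.arg_cos_add_sin_mul_I
      ⟨by nlinarith [Real.pi_gt_three], by nlinarith [Real.pi_gt_three]⟩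
  have hke : kIdx q (Complex.exp ((-1 : ℝ) * Complex.I)) = 0 := by
    rw [kIdx, Complex.norm_exp]
    simp
  have hθe : theta (Complex.exp ((-1 : ℝ) * Complex.I)) = -1 := by
    unfold theta
    rw [hargE]
    norm_num
  rw [chi, hke, hkγ, hθe] at hB
  simp only [zero_mul, zero_add, mul_neg_one] at hB
  rw [Complex.exp_eq_one_iff] at hB
  obtain ⟨m, hm⟩ := hB
  have hkm : -(k : ℝ) = 2 * Real.pi * m := by
    have := congrArg Complex.im hm
    simpa [Complex.ext_iff, mul_comm] using this
  have hk0 : k = 0 := by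
    by_contra hkne
    have hmne : m ≠ 0 := by
      rintro rfl
      simp at hkm
      exact hkne (by exact_mod_cast hkm)
    have hpi : Real.pi = (-(k : ℝ)) / (2 * m) := by
      have : (2 * (m : ℝ)) ≠ 0 := by
        simp [hmne]
      field_simp
      linarith [hkm]
    exact irrational_pi ⟨(-(k : ℚ)) / (2 * m), by push_cast [hpi]; ring⟩
  have habs : ‖γ‖ = 1 := by rw [hk, hk0]; simp
  calc γ = (‖γ‖ : ℂ) * Complex.exp (γ.arg * Complex.I) :=
        (Complex.norm_mul_exp_arg_mul_I γ).symm
    _ = 1 := by rw [habs, harg]; simp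
end
end

section
/- The quantum exponential function F_q, defined by F_q(γ) = ∏_{k=0}^∞ (1 + q^{2k} conj(γ))/(1 + q^{2k} γ) for γ ∈ Γ̄ \ {-1, -q^{-2}, -q^{-4}, ...} and F_q(γ) = -1 for γ ∈ {-1, -q^{-2}, -q^{-4}, ...}, is a continuous function from Γ̄ to the unit circle S¹. -/
noncomputable section

/-! ### Auxiliary lemmas -/

open scoped Classical

/-- A single factor of the infinite product. -/
def fac (q : ℝ) (k : ℕ) (z : ℂ) : ℂ :=
  (1 + (q : ℂ) ^ (2 * k) * (starRingEnd ℂ) z) / (1 + (q : ℂ) ^ (2 * k) * z)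

lemma FqProd_eq (q : ℝ) (z : ℂ) : FqProd q z = ∏' k : ℕ, fac q k z := rfl

variable {q : ℝ}

lemma abs_qpow (hq0 : 0 < q) (k : ℕ) : ‖(q : ℂ) ^ (2 * k)‖ = q ^ (2 * k) := by
  rw [norm_pow, Complex.norm_real, Real.norm_eq_abs, abs_of_pos hq0]

lemma qpow_le_one (hq0 : 0 < q) (hq1 : q < 1) (k : ℕ) : q ^ (2 * k) ≤ 1 :=
  pow_le_one₀ hq0.le hq1.le

lemma conj_qpow (k : ℕ) : (starRingEnd ℂ) ((q : ℂ) ^ (2 * k)) = (q : ℂ) ^ (2 * k) := by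
  rw [map_pow, Complex.conj_ofReal]

lemma den_lb (hq0 : 0 < q) (hq1 : q < 1) {z : ℂ} (hz : ‖z‖ ≤ 1 / 8) (k : ℕ) :
    7 / 8 ≤ ‖1 + (q : ℂ) ^ (2 * k) * z‖ := by
  have h1 : ‖(q : ℂ) ^ (2 * k) * z‖ ≤ 1 / 8 := by
    rw [norm_mul, abs_qpow hq0]
    calc q ^ (2 * k) * ‖z‖ ≤ 1 * (1 / 8) := by
          apply mul_le_mul (qpow_le_one hq0 hq1 k) hz (norm_nonneg z) one_pos.le
      _ = 1 / 8 := one_mul _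
  have h2 : ‖(1 : ℂ)‖ ≤ ‖1 + (q : ℂ) ^ (2 * k) * z‖ + ‖(q : ℂ) ^ (2 * k) * z‖ := by
    have := norm_sub_le (1 + (q : ℂ) ^ (2 * k) * z) ((q : ℂ) ^ (2 * k) * z)
    simpa using this
  simp only [norm_one] at h2
  linarith

lemma den_ne (hq0 : 0 < q) (hq1 : q < 1) {z : ℂ} (hz : ‖z‖ ≤ 1 / 8) (k : ℕ) :
    1 + (q : ℂ) ^ (2 * k) * z ≠ 0 := by
  intro h
  have := den_lb hq0 hq1 hz k
  rw [h] at this; simp at this; linarith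

lemma fac_sub_one (hq0 : 0 < q) (hq1 : q < 1) {z : ℂ} (hz : ‖z‖ ≤ 1 / 8) (k : ℕ) :
    ‖fac q k z - 1‖ ≤ 2 / 7 * q ^ (2 * k) := by
  have hd := den_ne hq0 hq1 hz k
  have : fac q k z - 1
      = (q : ℂ) ^ (2 * k) * ((starRingEnd ℂ) z - z) / (1 + (q : ℂ) ^ (2 * k) * z) := by
    rw [fac, div_sub_one hd]; ring_nf
  rw [this, norm_div, norm_mul, abs_qpow hq0]
  rw [div_le_iff₀ (lt_of_lt_of_le (by norm_num) (den_lb hq0 hq1 hz k))]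
  have h2 : ‖(starRingEnd ℂ) z - z‖ ≤ 1 / 4 := by
    calc ‖(starRingEnd ℂ) z - z‖
        ≤ ‖(starRingEnd ℂ) z‖ + ‖z‖ := by
          simpa using norm_sub_le ((starRingEnd ℂ) z) z
      _ ≤ 1 / 4 := by rw [Complex.norm_conj]; linarith
  calc q ^ (2 * k) * ‖(starRingEnd ℂ) z - z‖ ≤ q ^ (2 * k) * (1 / 4) := by
        apply mul_le_mul_of_nonneg_left h2 (pow_nonneg hq0.le _)
    _ ≤ 2 / 7 * q ^ (2 * k) * (7 / 8) := by nlinarith [pow_nonneg hq0.le (2 * k)]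
    _ ≤ 2 / 7 * q ^ (2 * k) * ‖1 + (q : ℂ) ^ (2 * k) * z‖ := by
        apply mul_le_mul_of_nonneg_left (den_lb hq0 hq1 hz k)
        positivity

lemma fac_re (hq0 : 0 < q) (hq1 : q < 1) {z : ℂ} (hz : ‖z‖ ≤ 1 / 8) (k : ℕ) :
    5 / 7 ≤ (fac q k z).re := by
  have h := fac_sub_one hq0 hq1 hz k
  have h2 : ‖fac q k z - 1‖ ≤ 2 / 7 :=
    h.trans (by nlinarith [qpow_le_one hq0 hq1 k, pow_nonneg hq0.le (2*k)])
  have h3 : |(fac q k z - 1).re| ≤ 2 / 7 := (Complex.abs_re_le_norm _).trans h2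
  have h4 : (fac q k z - 1).re = (fac q k z).re - 1 := by simp
  rw [h4] at h3
  have := abs_le.mp h3
  linarith [this.1]

lemma fac_slit (hq0 : 0 < q) (hq1 : q < 1) {z : ℂ} (hz : ‖z‖ ≤ 1 / 8) (k : ℕ) :
    fac q k z ∈ Complex.slitPlane :=
  Complex.mem_slitPlane_iff.mpr (Or.inl (lt_of_lt_of_le (by norm_num) (fac_re hq0 hq1 hz k)))

lemma fac_ne (hq0 : 0 < q) (hq1 : q < 1) {z : ℂ} (hz : ‖z‖ ≤ 1 / 8) (k : ℕ) :
    fac q k z ≠ 0 := Complex.slitPlane_ne_zero (fac_slit hq0 hq1 hz k)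

lemma log_fac_bound (hq0 : 0 < q) (hq1 : q < 1) {z : ℂ} (hz : ‖z‖ ≤ 1 / 8) (k : ℕ) :
    ‖Complex.log (fac q k z)‖ ≤ 3 / 7 * q ^ (2 * k) := by
  have h := fac_sub_one hq0 hq1 hz k
  have h2 : ‖fac q k z - 1‖ ≤ 1 / 2 := by
    exact h.trans (by nlinarith [qpow_le_one hq0 hq1 k, pow_nonneg hq0.le (2*k)])
  have := Complex.norm_log_one_add_half_le_self h2
  rw [add_sub_cancel] at this
  refine this.trans ?_
  nlinarith [fac_sub_one hq0 hq1 hz k, pow_nonneg hq0.le (2*k)]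

lemma u_summable (hq0 : 0 < q) (hq1 : q < 1) :
    Summable (fun k : ℕ => 3 / 7 * q ^ (2 * k)) := by
  have : ∀ k : ℕ, (3 : ℝ) / 7 * q ^ (2 * k) = 3 / 7 * (q ^ 2) ^ k := by
    intro k; rw [← pow_mul]
  simp only [this]
  exact (summable_geometric_of_lt_one (by positivity) (by nlinarith)).mul_left _

lemma log_summable (hq0 : 0 < q) (hq1 : q < 1) {z : ℂ} (hz : ‖z‖ ≤ 1 / 8) :
    Summable (fun k : ℕ => Complex.log (fac q k z)) :=
  (u_summable hq0 hq1).of_norm_bounded (log_fac_bound hq0 hq1 hz)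

lemma FqProd_formula (hq0 : 0 < q) (hq1 : q < 1) {z : ℂ} (hz : ‖z‖ ≤ 1 / 8) :
    FqProd q z = Complex.exp (∑' k : ℕ, Complex.log (fac q k z)) := by
  have hs := (log_summable hq0 hq1 hz).hasSum
  have he : (Complex.exp ∘ fun k : ℕ => Complex.log (fac q k z)) = fun k => fac q k z :=
    funext fun k => Complex.exp_log (fac_ne hq0 hq1 hz k)
  have hp := hs.cexp
  rw [he] at hp
  rw [FqProd_eq]
  exact hp.tprod_eq

lemma FqProd_contOn (hq0 : 0 < q) (hq1 : q < 1) :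
    ContinuousOn (FqProd q) {z : ℂ | ‖z‖ ≤ 1 / 8} := by
  set s : Set ℂ := {z : ℂ | ‖z‖ ≤ 1 / 8} with hs
  have hL : ContinuousOn (fun z => ∑' k : ℕ, Complex.log (fac q k z)) s := by
    apply continuousOn_tsum (u := fun k : ℕ => 3 / 7 * q ^ (2 * k))
    · intro k
      apply ContinuousOn.clog
      · apply ContinuousOn.div
        · exact (continuous_const.add (continuous_const.mul
            (Complex.continuous_conj))).continuousOn
        · exact (continuous_const.add (continuous_const.mul continuous_id)).continuousOn
        · intro x hx; exact den_ne hq0 hq1 hx k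
      · intro x hx; exact fac_slit hq0 hq1 hx k
    · exact u_summable hq0 hq1
    · intro k x hx; exact log_fac_bound hq0 hq1 hx k
  have := Complex.continuous_exp.comp_continuousOn hL
  exact this.congr fun z hz => FqProd_formula hq0 hq1 hz

lemma fac_shift (k N : ℕ) (z : ℂ) : fac q (k + N) z = fac q k ((q : ℂ) ^ (2 * N) * z) := by
  unfold fac
  rw [map_mul, conj_qpow]
  have : (q : ℂ) ^ (2 * (k + N)) = (q : ℂ) ^ (2 * k) * (q : ℂ) ^ (2 * N) := by
    rw [← pow_add]; ring_nf
  rw [this]; ring_nf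

lemma FqProd_split (hq0 : 0 < q) (hq1 : q < 1) (N : ℕ) {z : ℂ}
    (h8 : ‖(q : ℂ) ^ (2 * N) * z‖ ≤ 1 / 8)
    (hnum : ∀ k, 1 + (q : ℂ) ^ (2 * k) * (starRingEnd ℂ) z ≠ 0)
    (hden : ∀ k, 1 + (q : ℂ) ^ (2 * k) * z ≠ 0) :
    FqProd q z = (∏ k ∈ Finset.range N, fac q k z) * FqProd q ((q : ℂ) ^ (2 * N) * z) := by
  set w := (q : ℂ) ^ (2 * N) * z with hw
  have hfne : ∀ k, fac q k z ≠ 0 := fun k => div_ne_zero (hnum k) (hden k)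
  have htail : Summable (fun k : ℕ => Complex.log (fac q (k + N) z)) := by
    have : (fun k : ℕ => Complex.log (fac q (k + N) z))
        = fun k : ℕ => Complex.log (fac q k w) := by
      funext k; rw [fac_shift]
    rw [this]
    exact log_summable hq0 hq1 h8
  have hsum : Summable (fun k : ℕ => Complex.log (fac q k z)) :=
    (summable_nat_add_iff N).mp htail
  have hform : FqProd q z = Complex.exp (∑' k : ℕ, Complex.log (fac q k z)) := by
    have he : (Complex.exp ∘ fun k : ℕ => Complex.log (fac q k z)) = fun k => fac q k z :=
      funext fun k => Complex.exp_log (hfne k)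
    have hp := hsum.hasSum.cexp
    rw [he] at hp
    exact hp.tprod_eq
  rw [hform, ← Summable.sum_add_tsum_nat_add N hsum, Complex.exp_add, Complex.exp_sum]
  congr 1
  · exact Finset.prod_congr rfl fun k _ => Complex.exp_log (hfne k)
  · rw [FqProd_formula hq0 hq1 h8]
    congr 1
    exact tsum_congr fun k => by rw [fac_shift]

lemma FqProd_real (hq0 : 0 < q) (hq1 : q < 1) {x : ℝ} (hx : |x| ≤ 1 / 8) :
    FqProd q (x : ℂ) = 1 := by
  rw [FqProd_eq]
  have habs : ‖(x : ℂ)‖ ≤ 1 / 8 := by rwa [Complex.norm_real, Real.norm_eq_abs]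
  have : ∀ k : ℕ, fac q k (x : ℂ) = 1 := by
    intro k
    unfold fac
    rw [Complex.conj_ofReal]
    exact div_self (den_ne hq0 hq1 habs k)
  simp only [this]
  exact tprod_one

lemma den_zero_form (hq0 : 0 < q) (k : ℕ) {z : ℂ} (h : 1 + (q : ℂ) ^ (2 * k) * z = 0) :
    z = -((q : ℂ) ^ (2 * k))⁻¹ := by
  have ha : ((q : ℂ)) ^ (2 * k) ≠ 0 := by
    apply pow_ne_zero; exact_mod_cast hq0.ne'
  apply mul_left_cancel₀ ha
  rw [mul_neg, mul_inv_cancel₀ ha]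
  linear_combination h

lemma den_ne_of_not_exc (hq0 : 0 < q) {z : ℂ} (hz : z ∉ excSet q) (k : ℕ) :
    1 + (q : ℂ) ^ (2 * k) * z ≠ 0 := by
  intro h
  exact hz ⟨k, den_zero_form hq0 k h⟩

lemma num_ne_of_not_exc (hq0 : 0 < q) {z : ℂ} (hz : z ∉ excSet q) (k : ℕ) :
    1 + (q : ℂ) ^ (2 * k) * (starRingEnd ℂ) z ≠ 0 := by
  intro h
  have h2 : (starRingEnd ℂ) (1 + (q : ℂ) ^ (2 * k) * (starRingEnd ℂ) z) = 0 := by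
    rw [h]; simp
  rw [map_add, map_one, map_mul, conj_qpow, Complex.conj_conj] at h2
  exact den_ne_of_not_exc hq0 hz k h2

lemma abs_fac_one (hq0 : 0 < q) {z : ℂ} (hz : z ∉ excSet q) (k : ℕ) :
    ‖fac q k z‖ = 1 := by
  have hden := den_ne_of_not_exc hq0 hz k
  have hc : (starRingEnd ℂ) (1 + (q : ℂ) ^ (2 * k) * z)
      = 1 + (q : ℂ) ^ (2 * k) * (starRingEnd ℂ) z := by
    rw [map_add, map_one, map_mul, conj_qpow]
  rw [fac, norm_div, ← hc, Complex.norm_conj, div_self]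
  exact norm_ne_zero_iff.mpr hden

lemma abs_Fq_one (hq0 : 0 < q) (γ : ℂ) : ‖Fq q γ‖ = 1 := by
  rw [Fq]
  by_cases hexc : γ ∈ excSet q
  · rw [if_pos hexc]; simp
  · rw [if_neg hexc, FqProd_eq]
    by_cases hmul : Multipliable (fun k : ℕ => fac q k γ)
    · rw [hmul.norm_tprod]
      have : ∀ k : ℕ, ‖fac q k γ‖ = 1 := abs_fac_one hq0 hexc
      rw [tprod_congr this, tprod_one]
    · rw [tprod_eq_one_of_not_multipliable hmul]; simp

lemma zpow_inj' (hq0 : 0 < q) (hq1 : q < 1) {a b : ℤ} (h : (q : ℝ) ^ a = q ^ b) : a = b :=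
  (zpow_right_strictAnti₀ hq0 hq1).injective h

lemma qpow_inv_eq (q : ℝ) (k : ℕ) : ((q ^ (2 * k) : ℝ))⁻¹ = q ^ (-(2 * (k : ℤ))) := by
  rw [zpow_neg]
  norm_cast

lemma abs_exc_val (hq0 : 0 < q) (n : ℕ) :
    ‖-((q : ℂ) ^ (2 * n))⁻¹‖ = ((q ^ (2 * n) : ℝ))⁻¹ := by
  rw [norm_neg, norm_inv, abs_qpow hq0]

lemma sphere_local (hq0 : 0 < q) (hq1 : q < 1) {m : ℤ} {γ₀ z : ℂ}
    (hz : z ∈ GammaBar q) (hd : ‖z - γ₀‖ < q ^ m * (1 - q))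
    (h0 : ‖γ₀‖ = q ^ m) : ‖z‖ = q ^ m := by
  have hr : (0 : ℝ) < q ^ m := zpow_pos hq0 m
  have hq1' : 0 < 1 - q := by linarith
  have htri : |‖z‖ - ‖γ₀‖| ≤ ‖z - γ₀‖ := by
    simpa using abs_norm_sub_norm_le z γ₀
  rw [h0] at htri
  have hab := abs_lt.mp (lt_of_le_of_lt htri hd)
  have hub : ‖z‖ < q ^ m * (2 - q) := by nlinarith [hab.2]
  have hlb : q ^ m * q < ‖z‖ := by nlinarith [hab.1]
  rcases hz with ⟨j, hj⟩ | h0'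
  · rw [hj] at hub hlb ⊢
    have h1 : (q : ℝ) ^ j < q ^ (m - 1) := by
      have : q ^ m * (2 - q) < q ^ (m - 1) := by
        rw [zpow_sub₀ hq0.ne', zpow_one]
        rw [lt_div_iff₀ hq0]
        nlinarith
      linarith
    have h2 : (q : ℝ) ^ (m + 1) < q ^ j := by
      rw [zpow_add₀ hq0.ne', zpow_one]; linarith
    have hj1 : m - 1 < j := ((zpow_lt_zpow_iff_right_of_lt_one₀ hq0 hq1).mp h1)
    have hj2 : j < m + 1 := ((zpow_lt_zpow_iff_right_of_lt_one₀ hq0 hq1).mp h2)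
    have : j = m := by omega
    rw [this]
  · simp only [Set.mem_singleton_iff] at h0'
    subst h0'
    simp only [norm_zero] at hlb
    nlinarith

lemma fac_on_sphere (hq0 : 0 < q) {n : ℕ} {z : ℂ}
    (hz : ‖z‖ = ((q ^ (2 * n) : ℝ))⁻¹)
    (hne : z ∉ excSet q) :
    fac q n z = ((q : ℂ) ^ (2 * n))⁻¹ / z := by
  have ha : ((q : ℂ)) ^ (2 * n) ≠ 0 := by
    apply pow_ne_zero; exact_mod_cast hq0.ne'
  have hz0 : z ≠ 0 := by
    intro h; rw [h] at hz; simp at hz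
    exact absurd hz.symm (by positivity)
  have hcc : ((q : ℂ) ^ (2 * n)) ^ 2 * (z * (starRingEnd ℂ) z) = 1 := by
    rw [Complex.mul_conj, ← Complex.sq_norm, hz]
    have : ((q : ℂ) ^ (2 * n)) = ((q ^ (2 * n) : ℝ) : ℂ) := by push_cast; ring
    rw [this]
    norm_cast
    rw [← mul_pow, mul_inv_cancel₀ (by positivity : (q:ℝ)^(2*n) ≠ 0), one_pow]
  have hden : 1 + (q : ℂ) ^ (2 * n) * z ≠ 0 := den_ne_of_not_exc hq0 hne n
  rw [fac, div_eq_div_iff hden hz0]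
  field_simp
  linear_combination hcc

/-- the quantum exponential function `F_q` is a continuous function from
`Γ̄` to the unit circle `S¹`. -/
theorem stmt_9 (q : ℝ) (hq0 : 0 < q) (hq1 : q < 1) :
    ContinuousOn (Fq q) (GammaBar q) ∧
    ∀ γ : ℂ, γ ∈ GammaBar q → ‖Fq q γ‖ = 1 := by
  refine ⟨?_, fun γ _ => abs_Fq_one hq0 γ⟩
  intro γ₀ hγ₀
  rcases hγ₀ with hΓ | h0
  · -- γ₀ on a circle of radius q^m
    obtain ⟨m, hm⟩ := hΓ
    have hr : (0:ℝ) < q ^ m := zpow_pos hq0 m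
    obtain ⟨N₁, hN₁⟩ := exists_pow_lt_of_lt_one
      (show (0:ℝ) < 1/(8 * q^m) by positivity) hq1
    set n₀ : ℕ := if h : ∃ n : ℕ, m = -(2*(n:ℤ)) then h.choose else 0 with hn₀def
    set N : ℕ := max N₁ (n₀ + 1) with hNdef
    have h8 : ∀ z : ℂ, ‖z‖ = q ^ m →
        ‖(q:ℂ)^(2*N) * z‖ ≤ 1/8 := by
      intro z hz
      rw [norm_mul, abs_qpow hq0, hz]
      have h1 : q^(2*N) ≤ q^N₁ :=
        pow_le_pow_of_le_one hq0.le hq1.le (by omega)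
      calc q^(2*N) * q^m ≤ q^N₁ * q^m := by
            exact mul_le_mul_of_nonneg_right h1 hr.le
        _ ≤ (1/(8*q^m)) * q^m := mul_le_mul_of_nonneg_right hN₁.le hr.le
        _ = 1/8 := by field_simp
    set S : Set ℂ := {z | ‖z‖ = q ^ m} with hSdef
    set g : ℕ → ℂ → ℂ :=
      fun k z => if m = -(2*(k:ℤ)) then ((q:ℂ)^(2*k))⁻¹/z else fac q k z with hgdef
    set Ft : ℂ → ℂ :=
      fun z => (∏ k ∈ Finset.range N, g k z) * FqProd q ((q:ℂ)^(2*N)*z) with hFtdef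
    have hz0S : ∀ z ∈ S, z ≠ 0 := by
      intro z hz h0'
      rw [h0'] at hz
      simp only [hSdef, Set.mem_setOf_eq, norm_zero] at hz
      exact absurd hz.symm (ne_of_gt hr)
    have hqinv : ∀ k : ℕ, m = -(2*(k:ℤ)) → (q:ℝ) ^ m = ((q ^ (2 * k) : ℝ))⁻¹ := by
      intro k hk
      rw [qpow_inv_eq, hk]
    have hdenS : ∀ (k : ℕ), ∀ z ∈ S, m ≠ -(2*(k:ℤ)) → 1 + (q:ℂ)^(2*k) * z ≠ 0 := by
      intro k z hz hk h
      apply hk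
      have hzf := den_zero_form hq0 k h
      have habs : ‖z‖ = ((q ^ (2 * k) : ℝ))⁻¹ := by
        rw [hzf]; exact abs_exc_val hq0 k
      have hz' : ‖z‖ = q ^ m := hz
      exact zpow_inj' hq0 hq1 (by rw [← hz', habs, qpow_inv_eq])
    have hcont : ContinuousOn Ft S := by
      apply ContinuousOn.mul
      · apply continuousOn_finset_prod
        intro k _
        by_cases hk : m = -(2*(k:ℤ))
        · simp only [hgdef, if_pos hk]
          exact ContinuousOn.div continuousOn_const continuousOn_id
            (fun z hz => hz0S z hz)
        · simp only [hgdef, if_neg hk]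
          simp only [fac]
          apply ContinuousOn.div
          · exact (continuous_const.add
              (continuous_const.mul Complex.continuous_conj)).continuousOn
          · exact (continuous_const.add
              (continuous_const.mul continuous_id)).continuousOn
          · intro z hz; exact hdenS k z hz hk
      · apply (FqProd_contOn hq0 hq1).comp
          (continuous_const.mul continuous_id).continuousOn
        intro z hz
        exact h8 z hz
    have hEq : Set.EqOn (Fq q) Ft S := by
      intro z hzS
      have hzS' : ‖z‖ = q ^ m := hzS
      by_cases hexc : z ∈ excSet q
      · obtain ⟨j, hjz⟩ := hexc
        have habsj : ‖z‖ = ((q ^ (2 * j) : ℝ))⁻¹ := by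
          rw [hjz]; exact abs_exc_val hq0 j
        have hjm : m = -(2*(j:ℤ)) :=
          zpow_inj' hq0 hq1 (by rw [← hzS', habsj, qpow_inv_eq])
        have hP : ∃ n : ℕ, m = -(2*(n:ℤ)) := ⟨j, hjm⟩
        have hj_n₀ : j = n₀ := by
          have hc := hP.choose_spec
          rw [hn₀def]
          simp only [dif_pos hP]
          omega
        have hjN : j < N := by
          rw [hj_n₀, hNdef]
          exact lt_of_lt_of_le (Nat.lt_succ_self n₀) (le_max_right _ _)
        show Fq q z = Ft z
        rw [Fq, if_pos ⟨j, hjz⟩]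
        have hzreal : z = (((-(q^(2*j))⁻¹ : ℝ)) : ℂ) := by rw [hjz]; push_cast; ring
        have hconjz : (starRingEnd ℂ) z = z := by
          rw [hzreal]; exact Complex.conj_ofReal _
        have htail : FqProd q ((q:ℂ)^(2*N) * z) = 1 := by
          have habs8 := h8 z hzS'
          have hform : (q:ℂ)^(2*N) * z = ((( -(q^(2*N) * (q^(2*j))⁻¹) : ℝ)) : ℂ) := by
            rw [hzreal]; push_cast; ring
          rw [hform]
          apply FqProd_real hq0 hq1
          have h9 : ‖(((-(q^(2*N) * (q^(2*j))⁻¹) : ℝ)) : ℂ)‖ ≤ 1/8 := by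
            rw [← hform]; exact habs8
          rwa [Complex.norm_real, Real.norm_eq_abs] at h9
        have hprodfin : ∏ k ∈ Finset.range N, g k z = -1 := by
          have hgj : g j z = -1 := by
            simp only [hgdef, if_pos hjm]
            have ha : ((q:ℂ)^(2*j))⁻¹ ≠ 0 :=
              inv_ne_zero (pow_ne_zero _ (by exact_mod_cast hq0.ne'))
            rw [hjz, div_neg, div_self ha]
          have hother : ∀ k ∈ Finset.range N, k ≠ j → g k z = 1 := by
            intro k _ hkj
            have hkm : m ≠ -(2*(k:ℤ)) := by
              intro h; apply hkj; omega
            simp only [hgdef, if_neg hkm]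
            simp only [fac]
            rw [hconjz]
            exact div_self (hdenS k z hzS hkm)
          rw [Finset.prod_eq_single_of_mem j (Finset.mem_range.mpr hjN) hother, hgj]
        simp only [hFtdef]
        rw [hprodfin, htail]
        ring
      · show Fq q z = Ft z
        rw [Fq, if_neg hexc]
        rw [FqProd_split hq0 hq1 N (h8 z hzS') (num_ne_of_not_exc hq0 hexc)
          (den_ne_of_not_exc hq0 hexc)]
        simp only [hFtdef]
        congr 1
        apply Finset.prod_congr rfl
        intro k _
        by_cases hk : m = -(2*(k:ℤ))
        · simp only [hgdef, if_pos hk]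
          exact fac_on_sphere hq0 (by rw [hzS', hqinv k hk]) hexc
        · simp only [hgdef, if_neg hk]
    have hmemS : γ₀ ∈ S := hm
    have hSnhds : S ∈ nhdsWithin γ₀ (GammaBar q) := by
      rw [Metric.mem_nhdsWithin_iff]
      refine ⟨q^m * (1-q), by nlinarith, ?_⟩
      rintro z ⟨hball, hGB⟩
      exact sphere_local hq0 hq1 hGB
        (by rwa [Metric.mem_ball, Complex.dist_eq] at hball) hm
    exact ((hcont.congr hEq).continuousWithinAt hmemS).mono_of_mem_nhdsWithin hSnhds
  · -- γ₀ = 0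
    simp only [Set.mem_singleton_iff] at h0
    subst h0
    have hset : {z : ℂ | ‖z‖ ≤ 1/8} ∈ nhds (0:ℂ) := by
      have h1 : Metric.closedBall (0:ℂ) (1/8) ∈ nhds (0:ℂ) :=
        Metric.closedBall_mem_nhds _ (by norm_num)
      have : Metric.closedBall (0:ℂ) (1/8) = {z : ℂ | ‖z‖ ≤ 1/8} := by
        ext z; simp [Metric.mem_closedBall, Complex.dist_eq]
      rwa [this] at h1
    have hEq : Set.EqOn (Fq q) (FqProd q) {z : ℂ | ‖z‖ ≤ 1/8} := by
      intro z hz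
      rw [Fq, if_neg]
      rintro ⟨n, hn⟩
      have h1 : ‖z‖ = ((q ^ (2 * n) : ℝ))⁻¹ := by
        rw [hn]; exact abs_exc_val hq0 n
      have h2 : (1:ℝ) ≤ ((q ^ (2 * n) : ℝ))⁻¹ := by
        have hp : (0:ℝ) < q ^ (2 * n) := pow_pos hq0 _
        have h3 := mul_inv_cancel₀ hp.ne'
        nlinarith [qpow_le_one hq0 hq1 n, inv_nonneg.mpr hp.le]
      simp only [Set.mem_setOf_eq] at hz
      rw [h1] at hz
      linarith
    have hmem : (0:ℂ) ∈ {z : ℂ | ‖z‖ ≤ 1/8} := by simp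
    exact (((FqProd_contOn hq0 hq1).congr hEq).continuousWithinAt hmem).mono_of_mem_nhdsWithin
      (mem_nhdsWithin_of_mem_nhds hset)
end
end
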